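/- For any positive masses m₁, m₂, m₃, m₄, there exists exactly one r ∈ (0,∞)⁶ with I(r) = 1 and P(r) = 0 for which there exist real numbers λ, σ satisfying the co-circular central configuration equations; that is, the restriction of the Newtonian potential U to 𝓜⁺ has a unique critical point. -/

import Mathlib

/-- The Ptolemy function `P` as a function of
`r = (r₁₂, r₁₃, r₁₄, r₂₃, r₂₄, r₃₄) ∈ ℝ⁶`. -/
def Pvec (r : Fin 6 → ℝ) : ℝ :=
  r 0 * r 5 + r 2 * r 3 - r 1 * r 4

/-- The moment of inertia `I` as a function of `r ∈ ℝ⁶`. -/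
noncomputable def Ivec (m1 m2 m3 m4 : ℝ) (r : Fin 6 → ℝ) : ℝ :=
  (1/(2*(m1 + m2 + m3 + m4))) *
    (m1*m2*(r 0)^2 + m1*m3*(r 1)^2 + m1*m4*(r 2)^2 +
     m2*m3*(r 3)^2 + m2*m4*(r 4)^2 + m3*m4*(r 5)^2)

/-- The co-circular central configuration equations, with multipliers
`lam`, `sig`, for `r = (r₁₂, r₁₃, r₁₄, r₂₃, r₂₄, r₃₄) ∈ ℝ⁶`. -/
def cocircularCCEqns (m1 m2 m3 m4 : ℝ) (r : Fin 6 → ℝ) (lam sig : ℝ) : Prop :=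
  m1*m2*(1/(r 0)^3 - lam) = sig * (r 5 / r 0) ∧
  m3*m4*(1/(r 5)^3 - lam) = sig * (r 0 / r 5) ∧
  m1*m3*(1/(r 1)^3 - lam) = -sig * (r 4 / r 1) ∧
  m2*m4*(1/(r 4)^3 - lam) = -sig * (r 1 / r 4) ∧
  m1*m4*(1/(r 2)^3 - lam) = sig * (r 3 / r 2) ∧
  m2*m3*(1/(r 3)^3 - lam) = sig * (r 2 / r 3)

/-!
Write `φ(x) = 1/x - x²`. Rescaling makes `λ = 1`, and then the two equations of a pair of opposite
distances `x, y` with mass products `p, q` say `p φ(x) = ±σ x y = q φ(y)`: with `ψ = φ⁻¹` and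
`ρ = p/q`, the pair is `x = ψ(t)`, `y = ψ(ρ t)` for `t = φ(x)`, and
`σ² = m₁m₂m₃m₄ (1/x³ - 1)(1/y³ - 1)`. The product `k = (1/x³ - 1)(1/y³ - 1)` is strictly monotone
in `t` on either side of `0`, so the common value of `k` for the three pairs determines the
configuration; the Ptolemy relation forces the sides to have `t > 0` and the diagonals `t < 0`.
Along this one-parameter family the Ptolemy function `r₁₂r₃₄ + r₁₄r₂₃ - r₁₃r₂₄` strictly decreases
in `k`, from `1` at `k = 0` to a negative value at `k = 7/8`, so it has exactly one zero.
-/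

open Set

namespace Cocircular

noncomputable section

def phi (x : ℝ) : ℝ := 1 / x - x ^ 2

lemma phi_strictAntiOn : StrictAntiOn phi (Ioi 0) := by
  intro x hx y hy hxy
  have : 1 / y < 1 / x := one_div_lt_one_div_of_lt hx hxy
  have : x ^ 2 < y ^ 2 := pow_lt_pow_left₀ hxy (le_of_lt hx) two_ne_zero
  simp only [phi]
  linarith

lemma continuousOn_phi : ContinuousOn phi (Ioi 0) :=
  (continuousOn_const.div continuousOn_id fun _ hx => (ne_of_gt hx)).sub (continuousOn_pow 2)

lemma one_div_pow_three_sub_one_eq {x : ℝ} (hx : x ≠ 0) : 1 / x ^ 3 - 1 = phi x / x ^ 2 := by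
  unfold phi; field_simp

/-- `phi` is at least `t` at `x = 1/(|t| + 1)` and at most `t` at `x = |t| + 1`. -/
lemma exists_phi_eq (t : ℝ) : ∃ x, 0 < x ∧ phi x = t := by
  have ht : 0 < |t| + 1 := by positivity
  have hle : 1 / (|t| + 1) ≤ |t| + 1 := by
    rw [div_le_iff₀ ht]; nlinarith [abs_nonneg t]
  have hcont : ContinuousOn phi (Icc (1 / (|t| + 1)) (|t| + 1)) :=
    continuousOn_phi.mono fun x hx => lt_of_lt_of_le (by positivity) hx.1
  have hlo : phi (|t| + 1) ≤ t := by
    have : 1 / (|t| + 1) ≤ 1 := by rw [div_le_one ht]; linarith [abs_nonneg t]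
    simp only [phi]; nlinarith [abs_nonneg t, neg_abs_le t]
  have hhi : t ≤ phi (1 / (|t| + 1)) := by
    have : (1 / (|t| + 1)) ^ 2 ≤ 1 := by
      rw [div_pow, one_pow, div_le_one (by positivity)]; nlinarith [abs_nonneg t]
    simp only [phi, one_div_one_div]; linarith [le_abs_self t]
  obtain ⟨x, hx, rfl⟩ := intermediate_value_Icc' hle hcont ⟨hlo, hhi⟩
  exact ⟨x, lt_of_lt_of_le (by positivity) hx.1, rfl⟩

/-- Inverses are taken through order isomorphisms, which makes them continuous for free. -/
def negPhiIso : Ioi (0 : ℝ) ≃o ℝ :=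
  StrictMono.orderIsoOfSurjective (fun x => -phi x)
    (fun x y hxy => neg_lt_neg (phi_strictAntiOn x.2 y.2 hxy))
    (fun t => let ⟨x, hx, hxt⟩ := exists_phi_eq (-t); ⟨⟨x, hx⟩, by simp [hxt]⟩)

def psi (t : ℝ) : ℝ := negPhiIso.symm (-t)

lemma psi_pos (t : ℝ) : 0 < psi t := (negPhiIso.symm (-t)).2

lemma phi_psi (t : ℝ) : phi (psi t) = t :=
  neg_injective (negPhiIso.apply_symm_apply (-t))

lemma psi_phi {x : ℝ} (hx : 0 < x) : psi (phi x) = x :=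
  congrArg Subtype.val (negPhiIso.symm_apply_apply ⟨x, hx⟩)

lemma psi_strictAnti : StrictAnti psi :=
  fun _ _ h => negPhiIso.symm.strictMono (neg_lt_neg h)

lemma continuous_psi : Continuous psi :=
  continuous_subtype_val.comp (negPhiIso.symm.continuous.comp continuous_neg)

lemma psi_zero : psi 0 = 1 := by
  simpa [phi] using psi_phi one_pos

lemma psi_le_one {t : ℝ} (ht : 0 ≤ t) : psi t ≤ 1 :=
  psi_zero ▸ psi_strictAnti.antitone ht

lemma one_le_psi {t : ℝ} (ht : t ≤ 0) : 1 ≤ psi t :=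
  psi_zero ▸ psi_strictAnti.antitone ht

def defect (t : ℝ) : ℝ := 1 / psi t ^ 3 - 1

lemma defect_eq (t : ℝ) : defect t = t / psi t ^ 2 := by
  rw [defect, one_div_pow_three_sub_one_eq (psi_pos t).ne', phi_psi]

lemma strictMono_defect : StrictMono defect := by
  intro t t' h
  have h3 : psi t' ^ 3 < psi t ^ 3 :=
    pow_lt_pow_left₀ (psi_strictAnti h) (psi_pos t').le three_ne_zero
  have := one_div_lt_one_div_of_lt (pow_pos (psi_pos t') 3) h3
  simp only [defect]
  linarith

lemma continuous_defect : Continuous defect :=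
  (continuous_const.div (continuous_psi.pow 3) fun t => (pow_pos (psi_pos t) 3).ne').sub
    continuous_const

lemma defect_zero : defect 0 = 0 := by simp [defect, psi_zero]

lemma defect_nonneg {t : ℝ} (ht : 0 ≤ t) : 0 ≤ defect t :=
  defect_zero ▸ strictMono_defect.monotone ht

lemma defect_nonpos {t : ℝ} (ht : t ≤ 0) : defect t ≤ 0 :=
  defect_zero ▸ strictMono_defect.monotone ht

lemma neg_one_lt_defect (t : ℝ) : -1 < defect t := by
  have := one_div_pos.2 (pow_pos (psi_pos t) 3)
  simp only [defect]
  linarith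

lemma le_defect {t : ℝ} (ht : 0 ≤ t) : t ≤ defect t := by
  have h1 : psi t ^ 2 ≤ 1 := pow_le_one₀ (psi_pos t).le (psi_le_one ht)
  rw [defect_eq, le_div_iff₀ (pow_pos (psi_pos t) 2)]
  exact mul_le_of_le_one_right ht h1

lemma defect_le_of_le_phi {t X : ℝ} (hX : 1 ≤ X) (ht : t ≤ phi X) : defect t ≤ 1 / X - 1 := by
  have hXpos : 0 < X := by linarith
  have hXt : X ≤ psi t := psi_phi hXpos ▸ psi_strictAnti.antitone ht
  have h3 : 1 / psi t ^ 3 ≤ 1 / X ^ 3 :=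
    one_div_le_one_div_of_le (pow_pos hXpos 3) (pow_le_pow_left₀ hXpos.le hXt 3)
  have h4 : 1 / X ^ 3 ≤ 1 / X :=
    one_div_le_one_div_of_le hXpos (le_self_pow₀ hX three_ne_zero)
  simp only [defect]
  linarith

lemma two_le_psi_of_defect_le {t : ℝ} (h : defect t ≤ -7 / 8) : 2 ≤ psi t := by
  by_contra! hlt
  have h3 : psi t ^ 3 < 2 ^ 3 := pow_lt_pow_left₀ hlt (psi_pos t).le three_ne_zero
  have : 1 / 2 ^ 3 < 1 / psi t ^ 3 := one_div_lt_one_div_of_lt (pow_pos (psi_pos t) 3) h3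
  simp only [defect] at h
  linarith

/-- A pair of opposite distances is modelled as `psi t, psi (ρ * t)`. -/
def pairProd (ρ t : ℝ) : ℝ := defect t * defect (ρ * t)

def pairDist (ρ t : ℝ) : ℝ := psi t * psi (ρ * t)

variable {ρ : ℝ}

lemma pairProd_zero (ρ : ℝ) : pairProd ρ 0 = 0 := by simp [pairProd, defect_zero]

lemma continuous_pairProd (ρ : ℝ) : Continuous (pairProd ρ) :=
  continuous_defect.mul (continuous_defect.comp (continuous_const_mul ρ))

lemma pairProd_nonneg (hρ : 0 < ρ) {t : ℝ} (ht : 0 ≤ t) : 0 ≤ pairProd ρ t :=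
  mul_nonneg (defect_nonneg ht) (defect_nonneg (mul_nonneg hρ.le ht))

lemma pairProd_nonneg_of_nonpos (hρ : 0 < ρ) {t : ℝ} (ht : t ≤ 0) : 0 ≤ pairProd ρ t :=
  mul_nonneg_of_nonpos_of_nonpos (defect_nonpos ht)
    (defect_nonpos (mul_nonpos_of_nonneg_of_nonpos hρ.le ht))

lemma pairProd_lt_one (hρ : 0 < ρ) {t : ℝ} (ht : t ≤ 0) : pairProd ρ t < 1 := by
  have h1 := defect_nonpos ht
  have h2 := defect_nonpos (mul_nonpos_of_nonneg_of_nonpos hρ.le ht)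
  have h3 := neg_one_lt_defect t
  have h4 := neg_one_lt_defect (ρ * t)
  simp only [pairProd]
  nlinarith

lemma strictMonoOn_pairProd (hρ : 0 < ρ) : StrictMonoOn (pairProd ρ) (Ici 0) := by
  intro t ht t' _ h
  exact mul_lt_mul'' (strictMono_defect h) (strictMono_defect (mul_lt_mul_of_pos_left h hρ))
    (defect_nonneg ht) (defect_nonneg (mul_nonneg hρ.le ht))

lemma strictAntiOn_pairProd (hρ : 0 < ρ) : StrictAntiOn (pairProd ρ) (Iic 0) := by
  intro t _ t' ht' h
  rw [pairProd, pairProd, ← neg_mul_neg, ← neg_mul_neg (defect t)]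
  exact mul_lt_mul'' (neg_lt_neg (strictMono_defect h))
    (neg_lt_neg (strictMono_defect (mul_lt_mul_of_pos_left h hρ)))
    (neg_nonneg.2 (defect_nonpos ht'))
    (neg_nonneg.2 (defect_nonpos (mul_nonpos_of_nonneg_of_nonpos hρ.le ht')))

lemma mul_sq_le_pairProd (hρ : 0 < ρ) {t : ℝ} (ht : 0 ≤ t) : ρ * t ^ 2 ≤ pairProd ρ t := by
  have hρt : 0 ≤ ρ * t := mul_nonneg hρ.le ht
  calc ρ * t ^ 2 = t * (ρ * t) := by ring
    _ ≤ pairProd ρ t := mul_le_mul (le_defect ht) (le_defect hρt) hρt (defect_nonneg ht)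

lemma mul_mul_pairProd {p q : ℝ} (hq : q ≠ 0) (t : ℝ) :
    p * q * pairProd (p / q) t = (p * t / pairDist (p / q) t) ^ 2 := by
  have := psi_pos t
  have := psi_pos (p / q * t)
  rw [pairProd, pairDist, defect_eq, defect_eq]
  field_simp

lemma pairDist_pos (ρ t : ℝ) : 0 < pairDist ρ t := mul_pos (psi_pos t) (psi_pos _)

lemma pairDist_zero (ρ : ℝ) : pairDist ρ 0 = 1 := by simp [pairDist, psi_zero]

lemma continuous_pairDist (ρ : ℝ) : Continuous (pairDist ρ) :=
  continuous_psi.mul (continuous_psi.comp (continuous_const_mul ρ))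

lemma strictAnti_pairDist (hρ : 0 < ρ) : StrictAnti (pairDist ρ) := by
  intro t t' h
  exact mul_lt_mul'' (psi_strictAnti h) (psi_strictAnti (mul_lt_mul_of_pos_left h hρ))
    (psi_pos t').le (psi_pos _).le

lemma pairDist_le_one (hρ : 0 < ρ) {t : ℝ} (ht : 0 ≤ t) : pairDist ρ t ≤ 1 :=
  mul_le_one₀ (psi_le_one ht) (psi_pos _).le (psi_le_one (mul_nonneg hρ.le ht))

lemma one_le_pairDist (hρ : 0 < ρ) {t : ℝ} (ht : t ≤ 0) : 1 ≤ pairDist ρ t :=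
  one_le_mul_of_one_le_of_one_le (one_le_psi ht)
    (one_le_psi (mul_nonpos_of_nonneg_of_nonpos hρ.le ht))

lemma four_le_pairDist (hρ : 0 < ρ) {t : ℝ} (ht : t ≤ 0) (h : 7 / 8 ≤ pairProd ρ t) :
    4 ≤ pairDist ρ t := by
  have h1 := defect_nonpos ht
  have h2 := defect_nonpos (mul_nonpos_of_nonneg_of_nonpos hρ.le ht)
  have h3 := neg_one_lt_defect t
  have h4 := neg_one_lt_defect (ρ * t)
  simp only [pairProd] at h
  have e1 := two_le_psi_of_defect_le (t := t) (by nlinarith)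
  have e2 := two_le_psi_of_defect_le (t := ρ * t) (by nlinarith)
  simp only [pairDist]
  nlinarith

lemma exists_pairProd_eq_of_nonneg (hρ : 0 < ρ) {k : ℝ} (hk : 0 ≤ k) :
    ∃ t, 0 ≤ t ∧ pairProd ρ t = k := by
  have ht₀ : 0 ≤ k / ρ + 1 := by positivity
  have hk_le : k ≤ pairProd ρ (k / ρ + 1) := by
    have := mul_sq_le_pairProd hρ ht₀
    have : ρ * (k / ρ + 1) = k + ρ := by field_simp
    nlinarith
  obtain ⟨t, ht, htk⟩ := intermediate_value_Icc ht₀ (continuous_pairProd ρ).continuousOn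
    ⟨(pairProd_zero ρ).symm ▸ hk, hk_le⟩
  exact ⟨t, ht.1, htk⟩

/-- For `t₀ ≤ phi X` with `X = 2 / (1 - k)`, both factors of `pairProd ρ t₀` are at most
`1/X - 1 = -(1 + k)/2`, so `pairProd ρ t₀ ≥ ((1 + k)/2)² ≥ k`. -/
lemma exists_pairProd_eq_of_lt_one (hρ : 0 < ρ) {k : ℝ} (hk : 0 ≤ k) (hk1 : k < 1) :
    ∃ t, t ≤ 0 ∧ pairProd ρ t = k := by
  set X := 2 / (1 - k)
  have hX : 1 ≤ X := by rw [le_div_iff₀ (by linarith)]; linarith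
  have hφX : phi X ≤ 0 := by
    simpa [phi] using phi_strictAntiOn.antitoneOn (mem_Ioi.2 one_pos) (mem_Ioi.2 (by linarith)) hX
  set t₀ := phi X * (1 + 1 / ρ)
  have hφXρ : phi X / ρ ≤ 0 := div_nonpos_of_nonpos_of_nonneg hφX hρ.le
  have ht₀ : t₀ ≤ phi X := by simp only [t₀]; linarith [mul_one_div (phi X) ρ]
  have hρt₀ : ρ * t₀ ≤ phi X := by
    have : ρ * t₀ = phi X + ρ * phi X := by simp only [t₀]; field_simp; ring
    nlinarith
  have hXinv : 1 / X - 1 = -(1 + k) / 2 := by simp only [X]; field_simp; ring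
  have h1 := hXinv ▸ defect_le_of_le_phi hX ht₀
  have h2 := hXinv ▸ defect_le_of_le_phi hX hρt₀
  have hk_le : k ≤ pairProd ρ t₀ := by
    simp only [pairProd]
    nlinarith [sq_nonneg (1 - k)]
  obtain ⟨t, ht, htk⟩ := intermediate_value_Icc' (ht₀.trans hφX)
    (continuous_pairProd ρ).continuousOn ⟨(pairProd_zero ρ).symm ▸ hk, hk_le⟩
  exact ⟨t, ht.2, htk⟩

def sideIso (hρ : 0 < ρ) : Ici (0 : ℝ) ≃o Ici (0 : ℝ) :=
  StrictMono.orderIsoOfSurjective (fun t => ⟨pairProd ρ t, pairProd_nonneg hρ t.2⟩)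
    (fun t t' h => strictMonoOn_pairProd hρ t.2 t'.2 h)
    (fun k => let ⟨t, ht, htk⟩ := exists_pairProd_eq_of_nonneg hρ k.2
      ⟨⟨t, ht⟩, Subtype.ext htk⟩)

def diagIso (hρ : 0 < ρ) : Ici (0 : ℝ) ≃o Ico (0 : ℝ) 1 :=
  StrictMono.orderIsoOfSurjective
    (fun u => ⟨pairProd ρ (-u), pairProd_nonneg_of_nonpos hρ (neg_nonpos.2 u.2),
      pairProd_lt_one hρ (neg_nonpos.2 u.2)⟩)
    (fun u u' h => strictAntiOn_pairProd hρ (mem_Iic.2 (neg_nonpos.2 u'.2))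
      (mem_Iic.2 (neg_nonpos.2 u.2)) (neg_lt_neg h))
    (fun k => let ⟨t, ht, htk⟩ := exists_pairProd_eq_of_lt_one hρ k.2.1 k.2.2
      ⟨⟨-t, neg_nonneg.2 ht⟩, Subtype.ext (by simpa using htk)⟩)

def sideParam (hρ : 0 < ρ) (k : Ico (0 : ℝ) 1) : ℝ := (sideIso hρ).symm ⟨k, k.2.1⟩

def diagParam (hρ : 0 < ρ) (k : Ico (0 : ℝ) 1) : ℝ := -((diagIso hρ).symm k : ℝ)

lemma sideParam_nonneg (hρ : 0 < ρ) (k : Ico (0 : ℝ) 1) : 0 ≤ sideParam hρ k :=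
  ((sideIso hρ).symm _).2

lemma diagParam_nonpos (hρ : 0 < ρ) (k : Ico (0 : ℝ) 1) : diagParam hρ k ≤ 0 :=
  neg_nonpos.2 ((diagIso hρ).symm k).2

lemma pairProd_sideParam (hρ : 0 < ρ) (k : Ico (0 : ℝ) 1) : pairProd ρ (sideParam hρ k) = k :=
  congrArg Subtype.val ((sideIso hρ).apply_symm_apply ⟨k, k.2.1⟩)

lemma pairProd_diagParam (hρ : 0 < ρ) (k : Ico (0 : ℝ) 1) : pairProd ρ (diagParam hρ k) = k :=
  (congrArg Subtype.val ((diagIso hρ).apply_symm_apply k) :)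

lemma sideParam_eq (hρ : 0 < ρ) {k : Ico (0 : ℝ) 1} {t : ℝ} (ht : 0 ≤ t)
    (h : pairProd ρ t = k) : sideParam hρ k = t :=
  congrArg Subtype.val ((sideIso hρ).symm_apply_eq.2
    (Subtype.ext (h.symm : (k : ℝ) = pairProd ρ t) : ⟨k, k.2.1⟩ = sideIso hρ ⟨t, ht⟩))

lemma diagParam_eq (hρ : 0 < ρ) {k : Ico (0 : ℝ) 1} {t : ℝ} (ht : t ≤ 0)
    (h : pairProd ρ t = k) : diagParam hρ k = t := by
  have hk : k = diagIso hρ ⟨-t, neg_nonneg.2 ht⟩ := by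
    ext
    show (k : ℝ) = pairProd ρ (-(-t))
    rw [neg_neg, h]
  simp [diagParam, (diagIso hρ).symm_apply_eq.2 hk]

lemma strictMono_sideParam (hρ : 0 < ρ) : StrictMono (sideParam hρ) :=
  fun _ _ h => (sideIso hρ).symm.strictMono (Subtype.mk_lt_mk.2 h)

lemma strictAnti_diagParam (hρ : 0 < ρ) : StrictAnti (diagParam hρ) :=
  fun _ _ h => neg_lt_neg ((diagIso hρ).symm.strictMono h)

lemma continuous_sideParam (hρ : 0 < ρ) : Continuous (sideParam hρ) :=
  continuous_subtype_val.comp ((sideIso hρ).symm.continuous.comp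
    (continuous_subtype_val.subtype_mk _))

lemma continuous_diagParam (hρ : 0 < ρ) : Continuous (diagParam hρ) :=
  (continuous_subtype_val.comp (diagIso hρ).symm.continuous).neg

lemma mul_eq_mul_pairDist_iff {p q s t : ℝ} (hp : 0 < p) (hq : 0 < q) :
    p * t = s * pairDist (p / q) t ↔ p * q * pairProd (p / q) t = s ^ 2 ∧ 0 ≤ t * s := by
  rw [mul_mul_pairProd hq.ne', eq_comm, ← eq_div_iff (pairDist_pos _ _).ne']
  have hD := pairDist_pos (p / q) t
  set D := pairDist (p / q) t
  have hsign : ∀ s', p * t / D * s' = p / D * (t * s') := fun _ => by ring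
  constructor
  · rintro rfl
    refine ⟨rfl, nonneg_of_mul_nonneg_right (a := p / D) ?_ (by positivity)⟩
    exact hsign _ ▸ mul_self_nonneg _
  · rintro ⟨hsq, hts⟩
    have hxs : 0 ≤ p * t / D * s := hsign s ▸ mul_nonneg (by positivity) hts
    rcases sq_eq_sq_iff_eq_or_eq_neg.1 hsq with h | h
    · exact h.symm
    · nlinarith

def PairEqns (p q lam s x y : ℝ) : Prop :=
  p * (1 / x ^ 3 - lam) = s * (y / x) ∧ q * (1 / y ^ 3 - lam) = s * (x / y)

lemma PairEqns.smul {p q lam s x y c : ℝ} (h : PairEqns p q lam s x y) (hc : c ≠ 0) :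
    PairEqns p q (lam / c ^ 3) (s / c ^ 3) (c * x) (c * y) := by
  have key : ∀ z w : ℝ, 1 / (c * z) ^ 3 - lam / c ^ 3 = (1 / z ^ 3 - lam) / c ^ 3 ∧
      c * w / (c * z) = w / z := fun z w => ⟨by ring, mul_div_mul_left w z hc⟩
  constructor
  · rw [(key x y).1, (key x y).2, ← mul_div_assoc, h.1]; ring
  · rw [(key y x).1, (key y x).2, ← mul_div_assoc, h.2]; ring

lemma PairEqns.pos_of_nonpos {p q lam s x y : ℝ} (h : PairEqns p q lam s x y) (hp : 0 < p)
    (hx : 0 < x) (hy : 0 < y) (hlam : lam ≤ 0) : 0 < s := by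
  have : 0 < 1 / x ^ 3 - lam := by have := one_div_pos.2 (pow_pos hx 3); linarith
  exact (pos_iff_pos_of_mul_pos (h.1 ▸ mul_pos hp this)).2 (div_pos hy hx)

lemma pairEqns_one_iff {p q s x y : ℝ} (hq : 0 < q) (hx : 0 < x) (hy : 0 < y) :
    PairEqns p q 1 s x y ↔ ∃ t, x = psi t ∧ y = psi (p / q * t) ∧ p * t = s * (x * y) := by
  have hphi : ∀ {m z w : ℝ}, 0 < z → 0 < w →
      (m * (1 / z ^ 3 - 1) = s * (w / z) ↔ m * phi z = s * (z * w)) := fun hz hw => by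
    rw [one_div_pow_three_sub_one_eq hz.ne']
    constructor <;> intro h <;> field_simp at h ⊢ <;> linarith
  rw [PairEqns, hphi hx hy, hphi hy hx]
  constructor
  · rintro ⟨h1, h2⟩
    refine ⟨phi x, (psi_phi hx).symm, ?_, h1⟩
    rw [← psi_phi hy]
    congr 1
    field_simp
    linarith
  · rintro ⟨t, rfl, rfl, ht⟩
    have hq' : q * (p / q * t) = p * t := by field_simp
    rw [phi_psi, phi_psi, hq', ht, mul_comm (psi t)]
    exact ⟨rfl, rfl⟩

variable {m1 m2 m3 m4 : ℝ}

lemma cocircularCCEqns_iff {r : Fin 6 → ℝ} {lam sig : ℝ} :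
    cocircularCCEqns m1 m2 m3 m4 r lam sig ↔
      PairEqns (m1 * m2) (m3 * m4) lam sig (r 0) (r 5) ∧
      PairEqns (m1 * m3) (m2 * m4) lam (-sig) (r 1) (r 4) ∧
      PairEqns (m1 * m4) (m2 * m3) lam sig (r 2) (r 3) := by
  simp only [cocircularCCEqns, PairEqns, and_assoc]

lemma cocircularCCEqns_smul {r : Fin 6 → ℝ} {lam sig c : ℝ}
    (h : cocircularCCEqns m1 m2 m3 m4 r lam sig) (hc : c ≠ 0) :
    cocircularCCEqns m1 m2 m3 m4 (c • r) (lam / c ^ 3) (sig / c ^ 3) := by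
  obtain ⟨h12, h13, h14⟩ := cocircularCCEqns_iff.1 h
  refine cocircularCCEqns_iff.2 ⟨h12.smul hc, ?_, h14.smul hc⟩
  simpa only [neg_div, Pi.smul_apply, smul_eq_mul] using h13.smul hc

lemma Pvec_smul (c : ℝ) (r : Fin 6 → ℝ) : Pvec (c • r) = c ^ 2 * Pvec r := by
  simp only [Pvec, Pi.smul_apply, smul_eq_mul]; ring

lemma Ivec_smul (c : ℝ) (r : Fin 6 → ℝ) :
    Ivec m1 m2 m3 m4 (c • r) = c ^ 2 * Ivec m1 m2 m3 m4 r := by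
  simp only [Ivec, Pi.smul_apply, smul_eq_mul]; ring

lemma Ivec_pos (hm1 : 0 < m1) (hm2 : 0 < m2) (hm3 : 0 < m3) (hm4 : 0 < m4) {r : Fin 6 → ℝ}
    (hr : ∀ i, 0 < r i) : 0 < Ivec m1 m2 m3 m4 r := by
  have := hr 0
  unfold Ivec
  positivity

/-- For `λ ≤ 0` the pair `r₁₂, r₃₄` forces `σ > 0` and the pair `r₁₃, r₂₄` forces `-σ > 0`. -/
lemma lam_pos_of_cocircularCCEqns (hm1 : 0 < m1) (hm2 : 0 < m2) (hm3 : 0 < m3)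
    {r : Fin 6 → ℝ} {lam sig : ℝ} (hr : ∀ i, 0 < r i)
    (h : cocircularCCEqns m1 m2 m3 m4 r lam sig) : 0 < lam := by
  obtain ⟨h12, h13, -⟩ := cocircularCCEqns_iff.1 h
  by_contra! hlam
  have := h12.pos_of_nonpos (mul_pos hm1 hm2) (hr 0) (hr 5) hlam
  have := h13.pos_of_nonpos (mul_pos hm1 hm3) (hr 1) (hr 4) hlam
  linarith

lemma exists_smul_cocircularCCEqns_one (hm1 : 0 < m1) (hm2 : 0 < m2) (hm3 : 0 < m3)
    {r : Fin 6 → ℝ} {lam sig : ℝ} (hr : ∀ i, 0 < r i)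
    (h : cocircularCCEqns m1 m2 m3 m4 r lam sig) :
    ∃ c : ℝ, 0 < c ∧ ∃ σ, cocircularCCEqns m1 m2 m3 m4 (c • r) 1 σ := by
  have hlam := lam_pos_of_cocircularCCEqns hm1 hm2 hm3 hr h
  have hc : 0 < lam ^ ((3 : ℕ)⁻¹ : ℝ) := Real.rpow_pos_of_pos hlam _
  have hc3 : (lam ^ ((3 : ℕ)⁻¹ : ℝ)) ^ 3 = lam := Real.rpow_inv_natCast_pow hlam.le three_ne_zero
  refine ⟨lam ^ ((3 : ℕ)⁻¹ : ℝ), hc, sig / lam, ?_⟩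
  have := cocircularCCEqns_smul h hc.ne'
  rwa [hc3, div_self hlam.ne'] at this

/-- The parameters `s, d, w` belong to the pairs `(r₁₂, r₃₄)`, `(r₁₃, r₂₄)`, `(r₁₄, r₂₃)`. -/
def configOfParams (m1 m2 m3 m4 s d w : ℝ) : Fin 6 → ℝ :=
  ![psi s, psi d, psi w, psi (m1 * m4 / (m2 * m3) * w), psi (m1 * m3 / (m2 * m4) * d),
    psi (m1 * m2 / (m3 * m4) * s)]

lemma configOfParams_pos (s d w : ℝ) : ∀ i, 0 < configOfParams m1 m2 m3 m4 s d w i := by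
  intro i; fin_cases i <;> exact psi_pos _

lemma Pvec_configOfParams (s d w : ℝ) : Pvec (configOfParams m1 m2 m3 m4 s d w) =
    pairDist (m1 * m2 / (m3 * m4)) s + pairDist (m1 * m4 / (m2 * m3)) w
      - pairDist (m1 * m3 / (m2 * m4)) d :=
  rfl

lemma cocircularCCEqns_one_iff (hm2 : 0 < m2) (hm3 : 0 < m3) (hm4 : 0 < m4) {r : Fin 6 → ℝ}
    {σ : ℝ} (hr : ∀ i, 0 < r i) :
    cocircularCCEqns m1 m2 m3 m4 r 1 σ ↔ ∃ s d w, r = configOfParams m1 m2 m3 m4 s d w ∧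
      m1 * m2 * s = σ * pairDist (m1 * m2 / (m3 * m4)) s ∧
      m1 * m3 * d = -σ * pairDist (m1 * m3 / (m2 * m4)) d ∧
      m1 * m4 * w = σ * pairDist (m1 * m4 / (m2 * m3)) w := by
  rw [cocircularCCEqns_iff, pairEqns_one_iff (by positivity) (hr 0) (hr 5),
    pairEqns_one_iff (by positivity) (hr 1) (hr 4),
    pairEqns_one_iff (by positivity) (hr 2) (hr 3)]
  constructor
  · rintro ⟨⟨s, h0, h5, hs⟩, ⟨d, h1, h4, hd⟩, ⟨w, h2, h3, hw⟩⟩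
    refine ⟨s, d, w, ?_, by rwa [h0, h5] at hs, by rwa [h1, h4] at hd, by rwa [h2, h3] at hw⟩
    ext i
    fin_cases i <;> assumption
  · rintro ⟨s, d, w, rfl, hs, hd, hw⟩
    exact ⟨⟨s, rfl, rfl, hs⟩, ⟨d, rfl, rfl, hd⟩, ⟨w, rfl, rfl, hw⟩⟩

def config (hm1 : 0 < m1) (hm2 : 0 < m2) (hm3 : 0 < m3) (hm4 : 0 < m4) (k : Ico (0 : ℝ) 1) :
    Fin 6 → ℝ :=
  configOfParams m1 m2 m3 m4 (sideParam (div_pos (mul_pos hm1 hm2) (mul_pos hm3 hm4)) k)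
    (diagParam (div_pos (mul_pos hm1 hm3) (mul_pos hm2 hm4)) k)
    (sideParam (div_pos (mul_pos hm1 hm4) (mul_pos hm2 hm3)) k)

section config

variable (hm1 : 0 < m1) (hm2 : 0 < m2) (hm3 : 0 < m3) (hm4 : 0 < m4)

lemma cocircularCCEqns_config (k : Ico (0 : ℝ) 1) :
    cocircularCCEqns m1 m2 m3 m4 (config hm1 hm2 hm3 hm4 k) 1 √(m1 * m2 * m3 * m4 * k) := by
  have hσ : √(m1 * m2 * m3 * m4 * k) ^ 2 = m1 * m2 * m3 * m4 * k :=
    Real.sq_sqrt (mul_nonneg (by positivity) k.2.1)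
  have hσ0 := Real.sqrt_nonneg (m1 * m2 * m3 * m4 * k)
  rw [config, cocircularCCEqns_one_iff hm2 hm3 hm4 (configOfParams_pos _ _ _)]
  refine ⟨_, _, _, rfl, ?_, ?_, ?_⟩
  · refine (mul_eq_mul_pairDist_iff (by positivity) (by positivity)).2 ⟨?_, ?_⟩
    · rw [pairProd_sideParam, hσ]; ring
    · exact mul_nonneg (sideParam_nonneg _ k) hσ0
  · refine (mul_eq_mul_pairDist_iff (by positivity) (by positivity)).2 ⟨?_, ?_⟩
    · rw [pairProd_diagParam, neg_sq, hσ]; ring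
    · exact mul_nonneg_of_nonpos_of_nonpos (diagParam_nonpos _ k) (neg_nonpos.2 hσ0)
  · refine (mul_eq_mul_pairDist_iff (by positivity) (by positivity)).2 ⟨?_, ?_⟩
    · rw [pairProd_sideParam, hσ]; ring
    · exact mul_nonneg (sideParam_nonneg _ k) hσ0

/-- The Ptolemy relation rules out `σ ≤ 0`; then every pair has `pairProd = σ² / (m₁m₂m₃m₄)`. -/
lemma exists_eq_config {r : Fin 6 → ℝ} {σ : ℝ} (hr : ∀ i, 0 < r i) (hP : Pvec r = 0)
    (h : cocircularCCEqns m1 m2 m3 m4 r 1 σ) : ∃ k, r = config hm1 hm2 hm3 hm4 k := by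
  have h12 : 0 < m1 * m2 / (m3 * m4) := by positivity
  have h13 : 0 < m1 * m3 / (m2 * m4) := by positivity
  have h14 : 0 < m1 * m4 / (m2 * m3) := by positivity
  obtain ⟨s, d, w, rfl, hs, hd, hw⟩ := (cocircularCCEqns_one_iff hm2 hm3 hm4 hr).1 h
  have hD12 := pairDist_pos (m1 * m2 / (m3 * m4)) s
  have hD13 := pairDist_pos (m1 * m3 / (m2 * m4)) d
  have hD14 := pairDist_pos (m1 * m4 / (m2 * m3)) w
  have hσ : 0 < σ := by
    by_contra! hσ
    have hs0 : s ≤ 0 := by nlinarith [mul_pos hm1 hm2]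
    have hd0 : 0 ≤ d := by nlinarith [mul_pos hm1 hm3]
    have hw0 : w ≤ 0 := by nlinarith [mul_pos hm1 hm4]
    rw [Pvec_configOfParams] at hP
    linarith [one_le_pairDist h12 hs0, one_le_pairDist h14 hw0, pairDist_le_one h13 hd0]
  have hs0 : 0 ≤ s := by nlinarith [mul_pos hm1 hm2]
  have hd0 : d ≤ 0 := by nlinarith [mul_pos hm1 hm3]
  have hw0 : 0 ≤ w := by nlinarith [mul_pos hm1 hm4]
  obtain ⟨hs', -⟩ := (mul_eq_mul_pairDist_iff (by positivity) (by positivity)).1 hs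
  obtain ⟨hd', -⟩ := (mul_eq_mul_pairDist_iff (by positivity) (by positivity)).1 hd
  obtain ⟨hw', -⟩ := (mul_eq_mul_pairDist_iff (by positivity) (by positivity)).1 hw
  have hM : m1 * m2 * m3 * m4 ≠ 0 := by positivity
  have hks : pairProd (m1 * m2 / (m3 * m4)) s = σ ^ 2 / (m1 * m2 * m3 * m4) := by
    rw [eq_div_iff hM]; linear_combination hs'
  have hkd : pairProd (m1 * m3 / (m2 * m4)) d = σ ^ 2 / (m1 * m2 * m3 * m4) := by
    rw [eq_div_iff hM]; linear_combination hd'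
  have hkw : pairProd (m1 * m4 / (m2 * m3)) w = σ ^ 2 / (m1 * m2 * m3 * m4) := by
    rw [eq_div_iff hM]; linear_combination hw'
  refine ⟨⟨_, by positivity, hkd ▸ pairProd_lt_one h13 hd0⟩, ?_⟩
  rw [config, sideParam_eq h12 hs0 hks, diagParam_eq h13 hd0 hkd, sideParam_eq h14 hw0 hkw]

lemma Pvec_config (k : Ico (0 : ℝ) 1) : Pvec (config hm1 hm2 hm3 hm4 k) =
    pairDist (m1 * m2 / (m3 * m4)) (sideParam (div_pos (mul_pos hm1 hm2) (mul_pos hm3 hm4)) k) +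
    pairDist (m1 * m4 / (m2 * m3)) (sideParam (div_pos (mul_pos hm1 hm4) (mul_pos hm2 hm3)) k) -
    pairDist (m1 * m3 / (m2 * m4)) (diagParam (div_pos (mul_pos hm1 hm3) (mul_pos hm2 hm4)) k) :=
  Pvec_configOfParams _ _ _

/-- As `k` grows, both side products decrease and the diagonal product increases. -/
lemma strictAnti_Pvec_config : StrictAnti fun k => Pvec (config hm1 hm2 hm3 hm4 k) := by
  have h12 : 0 < m1 * m2 / (m3 * m4) := by positivity
  have h13 : 0 < m1 * m3 / (m2 * m4) := by positivity
  have h14 : 0 < m1 * m4 / (m2 * m3) := by positivity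
  intro k k' hk
  have h1 := strictAnti_pairDist h12 (strictMono_sideParam h12 hk)
  have h2 := strictAnti_pairDist h14 (strictMono_sideParam h14 hk)
  have h3 := strictAnti_pairDist h13 (strictAnti_diagParam h13 hk)
  simp only [Pvec_config]
  linarith

lemma continuous_Pvec_config : Continuous fun k => Pvec (config hm1 hm2 hm3 hm4 k) := by
  simp only [Pvec_config]
  exact (((continuous_pairDist _).comp (continuous_sideParam _)).add
    ((continuous_pairDist _).comp (continuous_sideParam _))).sub
    ((continuous_pairDist _).comp (continuous_diagParam _))

lemma Pvec_config_zero : Pvec (config hm1 hm2 hm3 hm4 ⟨0, left_mem_Ico.2 one_pos⟩) = 1 := by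
  rw [Pvec_config, sideParam_eq _ le_rfl (pairProd_zero _),
    sideParam_eq _ le_rfl (pairProd_zero _), diagParam_eq _ le_rfl (pairProd_zero _)]
  simp [pairDist_zero]

/-- At `k = 7/8` both diagonals exceed `2`, while the sides are at most `1`. -/
lemma Pvec_config_seven_eighths :
    Pvec (config hm1 hm2 hm3 hm4 ⟨7 / 8, by norm_num⟩) < 0 := by
  set k : Ico (0 : ℝ) 1 := ⟨7 / 8, by norm_num⟩
  have h12 := div_pos (mul_pos hm1 hm2) (mul_pos hm3 hm4)
  have h13 := div_pos (mul_pos hm1 hm3) (mul_pos hm2 hm4)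
  have h14 := div_pos (mul_pos hm1 hm4) (mul_pos hm2 hm3)
  have h1 := pairDist_le_one h12 (sideParam_nonneg h12 k)
  have h2 := pairDist_le_one h14 (sideParam_nonneg h14 k)
  have h3 := four_le_pairDist h13 (diagParam_nonpos h13 k) (pairProd_diagParam h13 k).ge
  rw [Pvec_config]
  linarith

lemma exists_Pvec_config_eq_zero : ∃ k, Pvec (config hm1 hm2 hm3 hm4 k) = 0 := by
  have := Subtype.preconnectedSpace (isPreconnected_Ico (a := (0 : ℝ)) (b := 1))
  exact intermediate_value_univ _ _ (continuous_Pvec_config hm1 hm2 hm3 hm4)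
    ⟨(Pvec_config_seven_eighths hm1 hm2 hm3 hm4).le,
      (Pvec_config_zero hm1 hm2 hm3 hm4).ge.trans' zero_le_one⟩

end config

def IsCocircularCC (m1 m2 m3 m4 : ℝ) (r : Fin 6 → ℝ) : Prop :=
  (∀ i, 0 < r i) ∧ Pvec r = 0 ∧ ∃ lam sig, cocircularCCEqns m1 m2 m3 m4 r lam sig

lemma exists_isCocircularCC (hm1 : 0 < m1) (hm2 : 0 < m2) (hm3 : 0 < m3) (hm4 : 0 < m4) :
    ∃ r, IsCocircularCC m1 m2 m3 m4 r := by
  obtain ⟨k, hk⟩ := exists_Pvec_config_eq_zero hm1 hm2 hm3 hm4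
  exact ⟨_, configOfParams_pos _ _ _, hk, _, _, cocircularCCEqns_config hm1 hm2 hm3 hm4 k⟩

lemma IsCocircularCC.smul {r : Fin 6 → ℝ} {c : ℝ} (h : IsCocircularCC m1 m2 m3 m4 r)
    (hc : 0 < c) : IsCocircularCC m1 m2 m3 m4 (c • r) := by
  obtain ⟨hr, hP, lam, sig, heq⟩ := h
  exact ⟨fun i => mul_pos hc (hr i), by rw [Pvec_smul, hP, mul_zero], _, _,
    cocircularCCEqns_smul heq hc.ne'⟩

lemma IsCocircularCC.exists_smul_eq_config (hm1 : 0 < m1) (hm2 : 0 < m2) (hm3 : 0 < m3)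
    (hm4 : 0 < m4) {r : Fin 6 → ℝ} (h : IsCocircularCC m1 m2 m3 m4 r) :
    ∃ c : ℝ, 0 < c ∧ ∃ k, c • r = config hm1 hm2 hm3 hm4 k := by
  obtain ⟨hr, hP, lam, sig, heq⟩ := h
  obtain ⟨c, hc, σ, hσ⟩ := exists_smul_cocircularCCEqns_one hm1 hm2 hm3 hr heq
  refine ⟨c, hc, exists_eq_config hm1 hm2 hm3 hm4 (fun i => mul_pos hc (hr i)) ?_ hσ⟩
  rw [Pvec_smul, hP, mul_zero]

lemma IsCocircularCC.exists_eq_smul (hm1 : 0 < m1) (hm2 : 0 < m2) (hm3 : 0 < m3)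
    (hm4 : 0 < m4) {r r' : Fin 6 → ℝ} (h : IsCocircularCC m1 m2 m3 m4 r)
    (h' : IsCocircularCC m1 m2 m3 m4 r') : ∃ c : ℝ, 0 < c ∧ r' = c • r := by
  obtain ⟨c, hc, k, hk⟩ := h.exists_smul_eq_config hm1 hm2 hm3 hm4
  obtain ⟨c', hc', k', hk'⟩ := h'.exists_smul_eq_config hm1 hm2 hm3 hm4
  have hPk : Pvec (config hm1 hm2 hm3 hm4 k) = Pvec (config hm1 hm2 hm3 hm4 k') := by
    rw [← hk, ← hk', Pvec_smul, Pvec_smul, h.2.1, h'.2.1, mul_zero, mul_zero]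
  have hkk' : k = k' := (strictAnti_Pvec_config hm1 hm2 hm3 hm4).injective hPk
  refine ⟨c'⁻¹ * c, by positivity, ?_⟩
  rw [mul_smul, hk, hkk', ← hk', inv_smul_smul₀ hc'.ne']

end

end Cocircular

/-- For any positive masses there is exactly one `r ∈ (0,∞)⁶` with `I(r) = 1`
and `P(r) = 0` satisfying the co-circular central configuration equations for
some multipliers `λ, σ`: the restriction `U|𝓜⁺` has a unique critical point. -/
theorem unique_critical_point_on_Mplus (m1 m2 m3 m4 : ℝ)
    (hm1 : 0 < m1) (hm2 : 0 < m2) (hm3 : 0 < m3) (hm4 : 0 < m4) :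
    ∃! r : Fin 6 → ℝ, (∀ i, 0 < r i) ∧
      Ivec m1 m2 m3 m4 r = 1 ∧ Pvec r = 0 ∧
      ∃ lam sig : ℝ, cocircularCCEqns m1 m2 m3 m4 r lam sig := by
  obtain ⟨r, hr⟩ := Cocircular.exists_isCocircularCC hm1 hm2 hm3 hm4
  have hI := Cocircular.Ivec_pos hm1 hm2 hm3 hm4 hr.1
  set c := (√(Ivec m1 m2 m3 m4 r))⁻¹
  have hIc : Ivec m1 m2 m3 m4 (c • r) = 1 := by
    rw [Cocircular.Ivec_smul, inv_pow, Real.sq_sqrt hI.le, inv_mul_cancel₀ hI.ne']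
  have hcr := hr.smul (c := c) (by positivity)
  refine ⟨c • r, ⟨hcr.1, hIc, hcr.2⟩, ?_⟩
  rintro r' ⟨hpos, hI', hP', heq'⟩
  obtain ⟨c', hc', rfl⟩ := hcr.exists_eq_smul hm1 hm2 hm3 hm4 ⟨hpos, hP', heq'⟩
  rw [Cocircular.Ivec_smul, hIc, mul_one, pow_eq_one_iff_of_nonneg hc'.le two_ne_zero] at hI'
  rw [hI', one_smul]
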